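/- In the setup of the chordless case, the corners of each non-edge block are pairwise distinct: if the i-th block G_i is not a single edge, then t_i, t_{i+1}, and the successor C' of t_i on P_{t_i t_{i+1}} are three distinct vertices; in particular, (t_i, t_{i+1}) is not an edge of G (otherwise {u_j, t_i, t_{i+1}} would be a separating triangle of G). -/

import Mathlib

/-!
Rotate the outer cycle so that `C` comes first. Then `P_CA` is an initial segment, the
corner order puts `B` strictly after `A`, and consecutive terminals `t_i`, `t_{i+1}` sit at
positions `p < q` of that segment. If `q > p + 1`, the successor of `t_i` is a third vertex
and `t_i t_{i+1}` is not an outer edge, hence (there being no chords) not an edge at all.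
If `q = p + 1`, then `t_i t_{i+1}` is an outer edge and `u_j` is an interior vertex, since
the only outer neighbours of `C` are `u_1` and `u_q`. The vertex `B` lies outside the
triangle `u_j t_i t_{i+1}`, so, there being no separating triangle, nothing lies inside it,
and the block is the single edge `t_i t_{i+1}`.
-/

open Set

namespace CZPaper

/-- A point in the plane. -/
abbrev Pt : Type := ℝ × ℝ

/-- A simple arc in the plane: a continuous injective curve `[0,1] → ℝ²`. -/
structure Arc where
  f : ℝ → Pt
  cont : ContinuousOn f (Set.Icc 0 1)
  inj : Set.InjOn f (Set.Icc 0 1)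

/-- The image (trace) of an arc. -/
def Arc.img (a : Arc) : Set Pt := a.f '' Set.Icc 0 1

/-- The two endpoints of an arc. -/
def Arc.ends (a : Arc) : Set Pt := {a.f 0, a.f 1}

/-- A plane drawing of a simple graph: vertices map injectively to points, each edge
to a simple arc joining the points of its endpoints, and arcs meet other arcs or
vertex points only at shared endpoints. -/
structure PlaneDrawing {V : Type*} (G : SimpleGraph V) where
  vpos : V → Pt
  vpos_inj : Function.Injective vpos
  arc : G.edgeSet → Arc
  arc_ends : ∀ e : G.edgeSet, ∃ u v : V, (e : Sym2 V) = s(u, v) ∧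
    (arc e).f 0 = vpos u ∧ (arc e).f 1 = vpos v
  vertex_arc : ∀ (e : G.edgeSet) (w : V), vpos w ∈ (arc e).img → vpos w ∈ (arc e).ends
  arc_arc : ∀ e e' : G.edgeSet, e ≠ e' →
    (arc e).img ∩ (arc e').img ⊆ (arc e).ends ∩ (arc e').ends

/-- A graph is planar if it admits a plane drawing. -/
def IsPlanar {V : Type*} (G : SimpleGraph V) : Prop := Nonempty (PlaneDrawing G)

/-- A graph is 4-connected if it has at least 5 vertices and deleting any set of at
most 3 vertices leaves it connected. -/
def FourConnected {V : Type*} (G : SimpleGraph V) : Prop :=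
  5 ≤ Nat.card V ∧
  ∀ S : Set V, S.ncard ≤ 3 → ((⊤ : G.Subgraph).deleteVerts S).coe.Connected



/-- An orthogonal curve: a simple polyline consisting of `k` nondegenerate axis-parallel
segments, with consecutive segments alternating between horizontal and vertical
(so that the number of bends is `k - 1`). -/
structure OrthoCurve where
  k : ℕ
  kpos : 0 < k
  pts : Fin (k + 1) → Pt
  axisAligned : ∀ i : Fin k,
    (pts i.castSucc).1 = (pts i.succ).1 ∨ (pts i.castSucc).2 = (pts i.succ).2
  nondegen : ∀ i : Fin k, pts i.castSucc ≠ pts i.succ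
  alternating : ∀ i j : Fin k, (j : ℕ) = (i : ℕ) + 1 →
    ((pts i.castSucc).1 = (pts i.succ).1 ↔ (pts j.castSucc).2 = (pts j.succ).2)
  simple : ∀ i j : Fin k, (i : ℕ) < (j : ℕ) →
    segment ℝ (pts i.castSucc) (pts i.succ) ∩ segment ℝ (pts j.castSucc) (pts j.succ) ⊆
      (if (i : ℕ) + 1 = (j : ℕ) then ({pts i.succ} : Set Pt) else (∅ : Set Pt))

/-- The image (trace) of an orthogonal curve. -/
def OrthoCurve.img (c : OrthoCurve) : Set Pt :=
  ⋃ i : Fin c.k, segment ℝ (c.pts i.castSucc) (c.pts i.succ)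

/-- The `i`-th segment of the curve is vertical. -/
def OrthoCurve.Vert (c : OrthoCurve) (i : Fin c.k) : Prop :=
  (c.pts i.castSucc).1 = (c.pts i.succ).1

/-- The number of bends of an orthogonal curve (with alternating segments). -/
def OrthoCurve.bends (c : OrthoCurve) : ℕ := c.k - 1

/-- A CZ-curve: an orthogonal curve with at most two bends and at most one vertical
segment. -/
def IsCZ (c : OrthoCurve) : Prop :=
  c.bends ≤ 2 ∧ {i : Fin c.k | c.Vert i}.ncard ≤ 1

/-- A B₂-curve: an orthogonal curve with at most two bends. -/
def IsB2 (c : OrthoCurve) : Prop := c.bends ≤ 2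

/-- Two orthogonal curves cross at a point `p`: `p` lies in the relative interior of a
segment of each, one of the two segments being horizontal and the other vertical. -/
def CrossAt (c d : OrthoCurve) (p : Pt) : Prop :=
  ∃ (i : Fin c.k) (j : Fin d.k),
    p ∈ openSegment ℝ (c.pts i.castSucc) (c.pts i.succ) ∧
    p ∈ openSegment ℝ (d.pts j.castSucc) (d.pts j.succ) ∧
    (c.Vert i ↔ ¬ d.Vert j)

/-- A 1-string representation of `G` by orthogonal curves of shape `P`: every vertex
carries a curve satisfying `P`, two curves intersect in at most one point, at which
they cross, and curves intersect iff the corresponding vertices are adjacent. -/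
structure OneStringRep {V : Type*} (G : SimpleGraph V) (P : OrthoCurve → Prop) where
  curve : V → OrthoCurve
  shape : ∀ v : V, P (curve v)
  atMostOne : ∀ u v : V, u ≠ v → ((curve u).img ∩ (curve v).img).Subsingleton
  crossing : ∀ u v : V, u ≠ v → ∀ p ∈ (curve u).img ∩ (curve v).img,
    CrossAt (curve u) (curve v) p
  adj_iff : ∀ u v : V, u ≠ v →
    (((curve u).img ∩ (curve v).img).Nonempty ↔ G.Adj u v)

/-- The image of a plane drawing: all vertex points and all arcs. -/
def PlaneDrawing.img {V : Type*} {G : SimpleGraph V} (D : PlaneDrawing G) : Set Pt :=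
  Set.range D.vpos ∪ ⋃ e : G.edgeSet, (D.arc e).img

/-- A face of a plane drawing: a connected component of the complement of the drawing. -/
def IsFaceOf {V : Type*} {G : SimpleGraph V} (D : PlaneDrawing G) (F : Set Pt) : Prop :=
  ∃ p ∈ D.imgᶜ, F = connectedComponentIn D.imgᶜ p

/-- The outer (unbounded) face of a plane drawing. -/
def PlaneDrawing.outerFace {V : Type*} {G : SimpleGraph V} (D : PlaneDrawing G) : Set Pt :=
  {p | p ∈ D.imgᶜ ∧ ¬ Bornology.IsBounded (connectedComponentIn D.imgᶜ p)}

/-- The points strictly inside a closed curve (Jordan curve) `J`. -/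
def insideOf (J : Set Pt) : Set Pt :=
  {p | p ∉ J ∧ Bornology.IsBounded (connectedComponentIn Jᶜ p)}

/-- The points strictly outside a closed curve `J`. -/
def outsideOf (J : Set Pt) : Set Pt :=
  {p | p ∉ J ∧ ¬ Bornology.IsBounded (connectedComponentIn Jᶜ p)}

/-- The arc of the edge `(u,v)` in a drawing. -/
def PlaneDrawing.earc {V : Type*} {G : SimpleGraph V} (D : PlaneDrawing G) {u v : V}
    (h : G.Adj u v) : Arc :=
  D.arc ⟨s(u, v), (G.mem_edgeSet).mpr h⟩

/-- The closed curve formed by the three arcs of a triangle `u,v,w` of `G`. -/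
def triCurve {V : Type*} {G : SimpleGraph V} (D : PlaneDrawing G) {u v w : V}
    (h1 : G.Adj u v) (h2 : G.Adj v w) (h3 : G.Adj w u) : Set Pt :=
  (D.earc h1).img ∪ (D.earc h2).img ∪ (D.earc h3).img

/-- The drawing has a separating triangle: a 3-cycle with at least one vertex drawn
inside it and at least one vertex drawn outside it. -/
def HasSepTriangle {V : Type*} {G : SimpleGraph V} (D : PlaneDrawing G) : Prop :=
  ∃ (u v w : V) (h1 : G.Adj u v) (h2 : G.Adj v w) (h3 : G.Adj w u),
    (∃ x : V, D.vpos x ∈ insideOf (triCurve D h1 h2 h3)) ∧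
    (∃ y : V, D.vpos y ∈ outsideOf (triCurve D h1 h2 h3))

/-- A face is bounded by a triangle of the graph. -/
def FaceIsTriangle {V : Type*} {G : SimpleGraph V} (D : PlaneDrawing G) (F : Set Pt) : Prop :=
  ∃ (u v w : V) (h1 : G.Adj u v) (h2 : G.Adj v w) (h3 : G.Adj w u),
    frontier F = triCurve D h1 h2 h3

/-- A planar triangulation: a plane graph in which every face, including the outer
face, is bounded by a triangle. -/
structure PlaneTriangulation (V : Type*) where
  G : SimpleGraph V
  D : PlaneDrawing G
  faces_tri : ∀ F : Set Pt, IsFaceOf D F → FaceIsTriangle D F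

/-- The cyclically consecutive pairs of a list, as edges. -/
def outerEdges {V : Type*} (l : List V) : Set (Sym2 V) :=
  {e | ∃ i j : Fin l.length, ((i : ℕ) + 1) % l.length = (j : ℕ) ∧ e = s(l.get i, l.get j)}

/-- A triangulated disk: a 2-connected plane graph, given together with the cyclic list
of vertices of its outer face in counterclockwise order, in which every interior
(bounded) face is a triangle. -/
structure TriDisk (V : Type*) [Finite V] where
  G : SimpleGraph V
  D : PlaneDrawing G
  card3 : 3 ≤ Nat.card V
  conn2 : ∀ x : V, ((⊤ : G.Subgraph).deleteVerts {x}).coe.Connected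
  outer : List V
  nodup : outer.Nodup
  len3 : 3 ≤ outer.length
  outer_adj : ∀ i j : Fin outer.length, ((i : ℕ) + 1) % outer.length = (j : ℕ) →
    G.Adj (outer.get i) (outer.get j)
  outer_frontier : frontier D.outerFace =
    ⋃ (e : G.edgeSet) (_ : (e : Sym2 V) ∈ outerEdges outer), (D.arc e).img
  interior_tri : ∀ F : Set Pt, IsFaceOf D F → Bornology.IsBounded F → FaceIsTriangle D F

/-- A W-triangulation: a triangulated disk with no separating triangle. -/
def TriDisk.IsW {V : Type*} [Finite V] (T : TriDisk V) : Prop := ¬ HasSepTriangle T.D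

/-- A chord of a triangulated disk: an interior edge with both endpoints on the
outer face. -/
def TriDisk.IsChord {V : Type*} [Finite V] (T : TriDisk V) (u v : V) : Prop :=
  T.G.Adj u v ∧ u ∈ T.outer ∧ v ∈ T.outer ∧ s(u, v) ∉ outerEdges T.outer

/-- `ccwPath l X Y`: the path along the (counterclockwise) cyclic list `l` from `X`
counterclockwise to `Y`, both inclusive. -/
def ccwPath {V : Type*} [DecidableEq V] (l : List V) (X Y : V) : List V :=
  ((l.rotate (l.idxOf X)).takeWhile (fun z => decide (z ≠ Y))) ++ [Y]

/-- `A`, `B`, `C` are distinct members of the cyclic list `l` appearing in this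
(counterclockwise) cyclic order. -/
def CcwOrder {V : Type*} [DecidableEq V] (l : List V) (A B C : V) : Prop :=
  A ∈ l ∧ B ∈ l ∧ C ∈ l ∧ A ≠ B ∧ B ≠ C ∧ A ≠ C ∧
  (l.rotate (l.idxOf A)).idxOf B < (l.rotate (l.idxOf A)).idxOf C

/-- The chord condition for a triangulated disk with corners `A`, `B`, `C`:
the corners lie on the outer face in counterclockwise order and no chord has both
endpoints on `P_{AB}`, both on `P_{BC}`, or both on `P_{CA}`. -/
def ChordCond {V : Type*} [Finite V] [DecidableEq V] (T : TriDisk V) (A B C : V) : Prop :=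
  CcwOrder T.outer A B C ∧
  ∀ u v : V, T.IsChord u v →
    (¬ (u ∈ ccwPath T.outer A B ∧ v ∈ ccwPath T.outer A B)) ∧
    (¬ (u ∈ ccwPath T.outer B C ∧ v ∈ ccwPath T.outer B C)) ∧
    (¬ (u ∈ ccwPath T.outer C A ∧ v ∈ ccwPath T.outer C A))


/-- The closed curve traced by the arcs of the (cyclically consecutive) edges of the
cycle given by the list `l`. -/
def listCycleCurve {V : Type*} {G : SimpleGraph V} (D : PlaneDrawing G) (l : List V) : Set Pt :=
  ⋃ (e : G.edgeSet) (_ : (e : Sym2 V) ∈ outerEdges l), (D.arc e).img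

/-- The vertices drawn on or inside the cycle `l`. -/
def enclosed {V : Type*} {G : SimpleGraph V} (D : PlaneDrawing G) (l : List V) : Set V :=
  {x | D.vpos x ∈ listCycleCurve D l ∨ D.vpos x ∈ insideOf (listCycleCurve D l)}

/-- `u` and `v` are joined by an edge of `G` drawn on or inside the cycle `l`. -/
def encAdj {V : Type*} {G : SimpleGraph V} (D : PlaneDrawing G) (l : List V) (u v : V) : Prop :=
  ∃ h : G.Adj u v,
    (D.earc h).img ⊆ listCycleCurve D l ∪ insideOf (listCycleCurve D l)


/-- The point at angle `θ` on the circle of radius `ε` around `s`. -/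
noncomputable def circlePt (s : Pt) (ε θ : ℝ) : Pt :=
  (s.1 + ε * Real.cos θ, s.2 + ε * Real.sin θ)

/-- Two simple curves cross at `s`: `s` is a point internal to both of them, and for
every sufficiently small circle around `s`, each curve meets the circle in exactly
two points, and the four points alternate (first curve, second curve, first curve,
second curve) in cyclic order around the circle. -/
def CrossesAt (a b : Arc) (s : Pt) : Prop :=
  s ∈ a.img ∧ s ∈ b.img ∧ s ∉ a.ends ∧ s ∉ b.ends ∧
  ∃ ε₀ > (0 : ℝ), ∀ ε : ℝ, 0 < ε → ε ≤ ε₀ →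
    ∃ θ : Fin 4 → ℝ, StrictMono θ ∧ θ 3 < θ 0 + 2 * Real.pi ∧
      a.img ∩ Metric.sphere s ε = {circlePt s ε (θ 0), circlePt s ε (θ 2)} ∧
      b.img ∩ Metric.sphere s ε = {circlePt s ε (θ 1), circlePt s ε (θ 3)}

/-- A 1-string representation of `G`: every vertex carries a simple curve, two curves
intersect in at most one point, at which they cross, and curves intersect iff the
corresponding vertices are adjacent. -/
structure StringRep1 {V : Type*} (G : SimpleGraph V) where
  curve : V → Arc
  atMostOne : ∀ u v : V, u ≠ v → ((curve u).img ∩ (curve v).img).Subsingleton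
  crossing : ∀ u v : V, u ≠ v → ∀ s ∈ (curve u).img ∩ (curve v).img,
    CrossesAt (curve u) (curve v) s
  adj_iff : ∀ u v : V, u ≠ v →
    (((curve u).img ∩ (curve v).img).Nonempty ↔ G.Adj u v)


/-- `v` is drawn on the boundary of the outer face of the drawing `D`. -/
def OnOuter {V : Type*} {G : SimpleGraph V} (D : PlaneDrawing G) (v : V) : Prop :=
  D.vpos v ∈ frontier D.outerFace

/-- An `int`-`F`-CZ-representation (in the generalized form): a 1-string representation
of `G` by CZ-curves in which curves `𝐮`, `𝐯` intersect (exactly once, crossing) iff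
`s(u,v) ∈ Req` (`Req` being the interior edges together with the special edges `F`);
moreover there is a rectangle `Θ` containing all intersections whose top side is
crossed, from right to left in order, by the curves of the vertices of the list `PAB`,
and whose bottom side is crossed, from left to right in order, by the curves of the
vertices of the list `PBA`; and the curve of every vertex of `Outer` (the outer face
vertices) has at most one bend. -/
structure IntCZRep {V : Type*} (G : SimpleGraph V) (Req : Set (Sym2 V))
    (PAB PBA : List V) (Outer : Set V) where
  curve : V → OrthoCurve
  cz : ∀ v : V, IsCZ (curve v)
  atMostOne : ∀ u v : V, u ≠ v → ((curve u).img ∩ (curve v).img).Subsingleton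
  crossing : ∀ u v : V, u ≠ v → ∀ p ∈ (curve u).img ∩ (curve v).img,
    CrossAt (curve u) (curve v) p
  req_iff : ∀ u v : V, u ≠ v →
    (((curve u).img ∩ (curve v).img).Nonempty ↔ s(u, v) ∈ Req)
  outer_bends : ∀ v ∈ Outer, (curve v).bends ≤ 1
  box : ∃ x₀ x₁ y₀ y₁ : ℝ, x₀ < x₁ ∧ y₀ < y₁ ∧
    (∀ u v : V, u ≠ v → (curve u).img ∩ (curve v).img ⊆ Set.Ioo x₀ x₁ ×ˢ Set.Ioo y₀ y₁) ∧
    (∃ xs : Fin PAB.length → ℝ, StrictAnti xs ∧ (∀ i, xs i ∈ Set.Ioo x₀ x₁) ∧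
      ∀ i, ((xs i, y₁) : Pt) ∈ (curve (PAB.get i)).img) ∧
    (∃ ys : Fin PBA.length → ℝ, StrictMono ys ∧ (∀ i, ys i ∈ Set.Ioo x₀ x₁) ∧
      ∀ i, ((ys i, y₀) : Pt) ∈ (curve (PBA.get i)).img)

/-- The subgraph of `T` on the vertex set `S`, with adjacency specified by `adjSpec`
and outer boundary (in counterclockwise order) satisfying `bdry`, inherits the drawing
of `T`, is a W-triangulation, and satisfies the chord condition with respect to the
corners `X`, `Y`, `Z`. -/
def PieceOn {V : Type*} [Finite V] [DecidableEq V] (T : TriDisk V) (S : Set V)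
    (adjSpec : V → V → Prop) (bdry : List V → Prop) (X Y Z : V) : Prop :=
  ∃ T1 : TriDisk ↥S,
    (∀ x y : ↥S, T1.G.Adj x y ↔ adjSpec ↑x ↑y) ∧
    (∀ x : ↥S, T1.D.vpos x = T.D.vpos ↑x) ∧
    (∀ e1 : T1.G.edgeSet, ∃ e : T.G.edgeSet,
      (e : Sym2 V) = Sym2.map Subtype.val (e1 : Sym2 ↥S) ∧
      (T1.D.arc e1).img = (T.D.arc e).img) ∧
    bdry (T1.outer.map Subtype.val) ∧
    T1.IsW ∧
    ∃ (hX : X ∈ S) (hY : Y ∈ S) (hZ : Z ∈ S),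
      ChordCond T1 ⟨X, hX⟩ ⟨Y, hY⟩ ⟨Z, hZ⟩

/-- The piece of `T` obtained when splitting along a chord: the subgraph induced by
the vertices on or inside the cycle `l`, with outer boundary `l`, is a W-triangulation
satisfying the chord condition with respect to the corners `X`, `Y`, `Z`. -/
def SplitPiece {V : Type*} [Finite V] [DecidableEq V] (T : TriDisk V) (l : List V)
    (X Y Z : V) : Prop :=
  PieceOn T (enclosed T.D l) (fun u v => T.G.Adj u v) (fun ol => ol = l) X Y Z

/-- The subgraph of `T` bounded by the cycle `l` (all vertices and edges drawn on or
inside `l`), with outer boundary `l`, is a W-triangulation satisfying the chord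
condition with respect to the corners `X`, `Y`, `Z`. -/
def BoundedPiece {V : Type*} [Finite V] [DecidableEq V] (T : TriDisk V) (l : List V)
    (X Y Z : V) : Prop :=
  PieceOn T (enclosed T.D l) (encAdj T.D l) (fun ol => ol = l) X Y Z


section OuterEdges

variable {α : Type*} {l : List α}

theorem outerEdges_rotate_subset (l : List α) (k : ℕ) :
    outerEdges (l.rotate k) ⊆ outerEdges l := by
  rintro _ ⟨i, j, hij, rfl⟩
  have hn : 0 < l.length := by simpa using i.pos
  refine ⟨⟨(i + k) % l.length, Nat.mod_lt _ hn⟩, ⟨(j + k) % l.length, Nat.mod_lt _ hn⟩, ?_, ?_⟩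
  · simp only [List.length_rotate] at hij
    show ((i + k) % l.length + 1) % l.length = (j + k) % l.length
    rw [Nat.mod_add_mod, ← hij, Nat.mod_add_mod, Nat.add_right_comm]
  · simp [List.getElem_rotate]

theorem outerEdges_rotate (l : List α) (k : ℕ) : outerEdges (l.rotate k) = outerEdges l := by
  refine (outerEdges_rotate_subset l k).antisymm ?_
  obtain ⟨m, hm⟩ : l.rotate k ~r l := List.IsRotated.symm ⟨k, rfl⟩
  conv_lhs => rw [← hm]
  exact outerEdges_rotate_subset _ _

theorem mk_getElem_mem_outerEdges_iff (hl : l.Nodup) {a b : ℕ} (ha : a < l.length)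
    (hb : b < l.length) :
    s(l[a], l[b]) ∈ outerEdges l ↔ (a + 1) % l.length = b ∨ (b + 1) % l.length = a := by
  constructor
  · rintro ⟨i, j, hij, he⟩
    simp only [List.get_eq_getElem, Sym2.eq_iff, hl.getElem_inj_iff] at he
    rcases he with ⟨rfl, rfl⟩ | ⟨rfl, rfl⟩
    exacts [Or.inl hij, Or.inr hij]
  · rintro (h | h)
    · exact ⟨⟨a, ha⟩, ⟨b, hb⟩, h, rfl⟩
    · exact ⟨⟨b, hb⟩, ⟨a, ha⟩, h, Sym2.eq_swap⟩

theorem outerEdges_triple (a b c : α) :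
    outerEdges [a, b, c] = {s(a, b), s(b, c), s(c, a)} := by
  ext e
  constructor
  · rintro ⟨i, j, hij, rfl⟩
    fin_cases i <;> fin_cases j <;> simp_all
  · rintro (rfl | rfl | rfl)
    · exact ⟨0, 1, rfl, rfl⟩
    · exact ⟨1, 2, rfl, rfl⟩
    · exact ⟨2, 0, by simp, rfl⟩

end OuterEdges

section CcwPath

variable {α : Type*} [DecidableEq α] {l : List α}

theorem takeWhile_ne_eq_take_idxOf (l : List α) (y : α) :
    l.takeWhile (fun z => decide (z ≠ y)) = l.take (l.idxOf y) := by
  induction l with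
  | nil => rfl
  | cons a t ih =>
    by_cases h : a = y
    · subst h; simp
    · simp only [ne_eq, decide_not] at ih ⊢
      simp [h, ih]

theorem ccwPath_eq_take_append (l : List α) (X Y : α) :
    ccwPath l X Y = (l.rotate (l.idxOf X)).take ((l.rotate (l.idxOf X)).idxOf Y) ++ [Y] := by
  rw [ccwPath, takeWhile_ne_eq_take_idxOf]

theorem idxOf_rotate_getElem (hl : l.Nodup) {a b : ℕ} (ha : a < l.length) (hb : b < l.length) :
    (l.rotate a).idxOf l[b] = (b + l.length - a) % l.length := by
  have hk : (b + l.length - a) % l.length < (l.rotate a).length := by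
    simpa using Nat.mod_lt _ (by omega : 0 < l.length)
  have hget : (l.rotate a)[(b + l.length - a) % l.length] = l[b] := by
    simp only [List.getElem_rotate, Nat.mod_add_mod]
    congr 1
    rw [show b + l.length - a + a = b + l.length by omega, Nat.add_mod_right,
      Nat.mod_eq_of_lt hb]
  rw [← hget]
  exact (List.nodup_rotate.2 hl).idxOf_getElem _ _

theorem ccwPath_getElem_of_le (hl : l.Nodup) {a b : ℕ} (hab : a ≤ b) (hb : b < l.length) :
    ccwPath l l[a] l[b] = (l.drop a).take (b - a + 1) := by
  rw [ccwPath_eq_take_append, hl.idxOf_getElem, idxOf_rotate_getElem hl (by omega) hb,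
    show b + l.length - a = b - a + l.length by omega, Nat.add_mod_right,
    Nat.mod_eq_of_lt (by omega), List.rotate_eq_drop_append_take (by omega),
    List.take_append_of_le_length (by simp; omega), List.take_add_one]
  simp [show a + (b - a) = b by omega, hb]

theorem ccwPath_getElem_of_lt (hl : l.Nodup) {a b : ℕ} (hba : b < a) (ha : a < l.length) :
    ccwPath l l[a] l[b] = l.drop a ++ l.take (b + 1) := by
  rw [ccwPath_eq_take_append, hl.idxOf_getElem, idxOf_rotate_getElem hl ha (by omega),
    Nat.mod_eq_of_lt (by omega), List.rotate_eq_drop_append_take ha.le, List.take_append,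
    List.take_of_length_le (by simp; omega), List.take_add_one, List.length_drop,
    show b + l.length - a - (l.length - a) = b by omega, List.take_take,
    Nat.min_eq_left hba.le, List.getElem?_eq_getElem (by omega), List.append_assoc]
  rfl

theorem rotate_idxOf_rotate (hl : l.Nodup) {x : α} (hx : x ∈ l) (k : ℕ) :
    (l.rotate k).rotate ((l.rotate k).idxOf x) = l.rotate (l.idxOf x) := by
  obtain ⟨i, hi, rfl⟩ := List.getElem_of_mem hx
  have hk := Nat.mod_lt k (by omega : 0 < l.length)
  rw [← List.rotate_mod l k, List.rotate_rotate, idxOf_rotate_getElem hl hk hi,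
    hl.idxOf_getElem, ← List.rotate_mod l (_ + _), Nat.add_mod_mod,
    show k % l.length + (i + l.length - k % l.length) = i + l.length by omega,
    Nat.add_mod_right, Nat.mod_eq_of_lt hi]

theorem ccwPath_rotate (hl : l.Nodup) {X : α} (hX : X ∈ l) (k : ℕ) (Y : α) :
    ccwPath (l.rotate k) X Y = ccwPath l X Y := by
  rw [ccwPath, ccwPath, rotate_idxOf_rotate hl hX]

theorem CcwOrder.rotate {A B C : α} (h : CcwOrder l A B C) (hl : l.Nodup) (k : ℕ) :
    CcwOrder (l.rotate k) A B C := by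
  obtain ⟨hA, hB, hC, hAB, hBC, hAC, hord⟩ := h
  refine ⟨List.mem_rotate.2 hA, List.mem_rotate.2 hB, List.mem_rotate.2 hC, hAB, hBC, hAC, ?_⟩
  rwa [rotate_idxOf_rotate hl hA]

theorem exists_rotate_idxOf_eq_cons {x : α} (hx : x ∈ l) :
    ∃ m, l.rotate (l.idxOf x) = x :: m := by
  have hi := List.idxOf_lt_length_iff.2 hx
  rw [List.rotate_eq_drop_append_take hi.le, List.drop_eq_getElem_cons hi, List.getElem_idxOf]
  exact ⟨_, rfl⟩

theorem CcwOrder.exists_getElem {A B : α} (hl : l.Nodup) (h0 : 0 < l.length)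
    (h : CcwOrder l A B l[0]) :
    ∃ a b, ∃ (hab : a < b) (hb : b < l.length), 0 < a ∧ l[a] = A ∧ l[b] = B := by
  obtain ⟨hA, hB, -, hAB, -, hAC, hord⟩ := h
  obtain ⟨a, ha, rfl⟩ := List.getElem_of_mem hA
  obtain ⟨b, hb, rfl⟩ := List.getElem_of_mem hB
  rw [hl.idxOf_getElem, idxOf_rotate_getElem hl ha hb, idxOf_rotate_getElem hl ha h0] at hord
  have ha0 : a ≠ 0 := by rintro rfl; exact hAC rfl
  have hab : a ≠ b := by rintro rfl; exact hAB rfl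
  have hlt : a < b := by
    by_contra hba
    rw [Nat.mod_eq_of_lt (by omega), Nat.mod_eq_of_lt (by omega)] at hord
    omega
  exact ⟨a, b, hlt, hb, by omega, rfl, rfl⟩

theorem ccwPath_getElem_eq_pair_or (hl : l.Nodup) {p q : ℕ} (hpq : p < q)
    (hq : q + 1 < l.length) :
    (ccwPath l l[p] l[q] = [l[p], l[q]] ∧ s(l[p], l[q]) ∈ outerEdges l) ∨
    ∃ h : 1 < (ccwPath l l[p] l[q]).length,
      (ccwPath l l[p] l[q])[1] ≠ l[p] ∧ (ccwPath l l[p] l[q])[1] ≠ l[q] ∧ l[p] ≠ l[q] ∧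
      s(l[p], l[q]) ∉ outerEdges l := by
  rw [ccwPath_getElem_of_le hl hpq.le (by omega),
    mk_getElem_mem_outerEdges_iff hl (by omega) (by omega),
    Nat.mod_eq_of_lt (by omega : p + 1 < l.length), Nat.mod_eq_of_lt hq]
  rcases Nat.lt_or_ge (p + 1) q with hlt | hge
  · right
    refine ⟨by simp; omega, ?_⟩
    simp only [List.getElem_take, List.getElem_drop, ne_eq, hl.getElem_inj_iff]
    omega
  · left
    obtain rfl : q = p + 1 := by omega
    refine ⟨?_, Or.inl rfl⟩
    rw [Nat.add_sub_cancel_left, List.drop_eq_getElem_cons (by omega),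
      List.drop_eq_getElem_cons (by omega)]
    rfl

theorem ccwPath_eq_pair_or_of_pair_sublist (hl : l.Nodup) {a b : ℕ} (hab : a < b)
    (hb : b < l.length) {x y : α} (hxy : [x, y].Sublist (ccwPath l l[0] l[a])) :
    (ccwPath l x y = [x, y] ∧ s(x, y) ∈ outerEdges l) ∨
    ∃ h : 1 < (ccwPath l x y).length,
      (ccwPath l x y)[1] ≠ x ∧ (ccwPath l x y)[1] ≠ y ∧ x ≠ y ∧ s(x, y) ∉ outerEdges l := by
  rw [ccwPath_getElem_of_le hl (Nat.zero_le a) (by omega), List.drop_zero, Nat.sub_zero] at hxy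
  obtain ⟨is, his, hpw⟩ := List.sublist_eq_map_getElem hxy
  rcases is with _ | ⟨p, _ | ⟨q, _ | ⟨r, is⟩⟩⟩ <;> simp only [List.map_cons, List.map_nil,
    List.cons.injEq, reduceCtorEq, and_false, and_true, List.nil_eq] at his
  obtain ⟨rfl, rfl⟩ := his
  have hpq : p < q := List.rel_of_pairwise_cons hpw (List.mem_singleton_self q)
  have hq := q.isLt
  simp only [List.length_take] at hq
  simp only [Fin.getElem_fin, List.getElem_take]
  exact ccwPath_getElem_eq_pair_or hl hpq (by omega)

theorem not_mem_ccwPath_getElem (hl : l.Nodup) {a b : ℕ} (hab : a < b) (hb : b < l.length) :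
    l[b] ∉ ccwPath l l[0] l[a] := by
  rw [ccwPath_getElem_of_le hl (Nat.zero_le a) (by omega), List.drop_zero]
  intro hmem
  obtain ⟨k, hk, heq⟩ := List.getElem_of_mem hmem
  rw [List.getElem_take, hl.getElem_inj_iff] at heq
  simp only [List.length_take] at hk
  omega

theorem getElem_eq_ccwPath_of_mk_mem_outerEdges (hl : l.Nodup) {a b k : ℕ} (ha : 0 < a)
    (hab : a < b) (hb : b < l.length) (hk : k < l.length) (hedge : s(l[0], l[k]) ∈ outerEdges l) :
    some l[k] = (ccwPath l l[0] l[a])[1]? ∨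
    some l[k] = (ccwPath l l[b] l[0])[(ccwPath l l[b] l[0]).length - 2]? := by
  rw [mk_getElem_mem_outerEdges_iff hl (by omega) hk] at hedge
  rw [ccwPath_getElem_of_le hl (Nat.zero_le a) (by omega),
    ccwPath_getElem_of_lt hl (by omega) hb]
  rcases hedge with h | h
  · left
    rw [Nat.mod_eq_of_lt (by omega)] at h
    subst h
    simp [List.getElem?_take, show 1 < l.length by omega]; omega
  · right
    have hk' : k = l.length - 1 := by
      rcases Nat.lt_or_ge (k + 1) l.length with h' | h'
      · rw [Nat.mod_eq_of_lt h'] at h; omega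
      · omega
    subst hk'
    simp only [List.length_append, List.length_drop, List.length_take]
    rw [show l.length - b + min 1 l.length - 2 = l.length - b - 1 by omega,
      List.getElem?_append_left (by simp; omega), List.getElem?_drop,
      show b + (l.length - b - 1) = l.length - 1 by omega, List.getElem?_eq_getElem]

variable {A B C : α}

theorem mem_of_mem_ccwPath {X Y x : α} (hY : Y ∈ l) (hx : x ∈ ccwPath l X Y) : x ∈ l := by
  rcases List.mem_append.1 hx with hx | hx
  · exact List.mem_rotate.1 (List.takeWhile_subset _ hx)
  · rwa [List.mem_singleton.1 hx]

theorem CcwOrder.not_mem_ccwPath (h : CcwOrder l A B C) (hl : l.Nodup) :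
    B ∉ ccwPath l C A := by
  obtain ⟨m, hm⟩ := exists_rotate_idxOf_eq_cons h.2.2.1
  have hr : (C :: m).Nodup := hm ▸ List.nodup_rotate.2 hl
  obtain ⟨a, b, hab, hb, -, rfl, rfl⟩ :=
    (hm ▸ h.rotate hl (l.idxOf C)).exists_getElem hr (by simp)
  rw [← ccwPath_rotate hl h.2.2.1 (l.idxOf C), hm]
  exact not_mem_ccwPath_getElem hr hab hb

theorem CcwOrder.ccwPath_eq_pair_or_of_pair_sublist (h : CcwOrder l A B C) (hl : l.Nodup)
    {x y : α} (hxy : [x, y].Sublist (ccwPath l C A)) :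
    (ccwPath l x y = [x, y] ∧ s(x, y) ∈ outerEdges l) ∨
    ∃ h : 1 < (ccwPath l x y).length,
      (ccwPath l x y)[1] ≠ x ∧ (ccwPath l x y)[1] ≠ y ∧ x ≠ y ∧ s(x, y) ∉ outerEdges l := by
  have hx : x ∈ l := mem_of_mem_ccwPath h.1 (hxy.subset List.mem_cons_self)
  obtain ⟨m, hm⟩ := exists_rotate_idxOf_eq_cons h.2.2.1
  have hr : (C :: m).Nodup := hm ▸ List.nodup_rotate.2 hl
  obtain ⟨a, b, hab, hb, -, rfl, rfl⟩ :=
    (hm ▸ h.rotate hl (l.idxOf C)).exists_getElem hr (by simp)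
  rw [← ccwPath_rotate hl h.2.2.1 (l.idxOf C), hm] at hxy
  rw [← ccwPath_rotate hl hx (l.idxOf C), ← outerEdges_rotate l (l.idxOf C), hm]
  exact ccwPath_eq_pair_or_of_pair_sublist hr hab hb hxy

theorem CcwOrder.eq_ccwPath_of_mk_mem_outerEdges (h : CcwOrder l A B C) (hl : l.Nodup) {u : α}
    (hu : u ∈ l) (hedge : s(C, u) ∈ outerEdges l) :
    some u = (ccwPath l C A)[1]? ∨
    some u = (ccwPath l B C)[(ccwPath l B C).length - 2]? := by
  obtain ⟨m, hm⟩ := exists_rotate_idxOf_eq_cons h.2.2.1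
  have hr : (C :: m).Nodup := hm ▸ List.nodup_rotate.2 hl
  obtain ⟨a, b, hab, hb, ha, rfl, rfl⟩ :=
    (hm ▸ h.rotate hl (l.idxOf C)).exists_getElem hr (by simp)
  rw [← outerEdges_rotate l (l.idxOf C), hm] at hedge
  obtain ⟨k, hk, rfl⟩ := List.getElem_of_mem (hm ▸ List.mem_rotate.2 hu : u ∈ C :: m)
  rw [← ccwPath_rotate hl h.2.2.1 (l.idxOf C), ← ccwPath_rotate hl h.2.1 (l.idxOf C), hm]
  exact getElem_eq_ccwPath_of_mk_mem_outerEdges hr ha hab hb hk hedge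

end CcwPath

section Drawing

variable {V : Type*} {G : SimpleGraph V}

theorem Arc.isCompact_img (a : Arc) : IsCompact a.img :=
  isCompact_Icc.image_of_continuousOn a.cont

theorem PlaneDrawing.vpos_mem_arc (D : PlaneDrawing G) {u v : V} {e : G.edgeSet}
    (he : (e : Sym2 V) = s(u, v)) : D.vpos u ∈ (D.arc e).img ∧ D.vpos v ∈ (D.arc e).img := by
  obtain ⟨a, b, hab, h0, h1⟩ := D.arc_ends e
  have m0 : D.vpos a ∈ (D.arc e).img := h0 ▸ ⟨0, by norm_num, rfl⟩
  have m1 : D.vpos b ∈ (D.arc e).img := h1 ▸ ⟨1, by norm_num, rfl⟩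
  rcases Sym2.eq_iff.1 (he.symm.trans hab) with ⟨rfl, rfl⟩ | ⟨rfl, rfl⟩
  exacts [⟨m0, m1⟩, ⟨m1, m0⟩]

theorem PlaneDrawing.eq_or_eq_of_vpos_mem_arc (D : PlaneDrawing G) {u v w : V}
    {e : G.edgeSet} (he : (e : Sym2 V) = s(u, v)) (hw : D.vpos w ∈ (D.arc e).img) :
    w = u ∨ w = v := by
  obtain ⟨a, b, hab, h0, h1⟩ := D.arc_ends e
  have hab' : w = a ∨ w = b := by
    have hend := D.vertex_arc e w hw
    rw [Arc.ends, h0, h1] at hend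
    exact hend.imp (fun h => D.vpos_inj h) (fun h => D.vpos_inj h)
  rcases Sym2.eq_iff.1 (he.symm.trans hab) with ⟨rfl, rfl⟩ | ⟨rfl, rfl⟩
  exacts [hab', hab'.symm]

variable (D : PlaneDrawing G) {x y z : V} (h1 : G.Adj x y) (h2 : G.Adj y z) (h3 : G.Adj z x)

theorem vpos_mem_triCurve_iff {w : V} :
    D.vpos w ∈ triCurve D h1 h2 h3 ↔ w = x ∨ w = y ∨ w = z := by
  constructor
  · rintro ((hw | hw) | hw)
    · rcases D.eq_or_eq_of_vpos_mem_arc rfl hw with rfl | rfl <;> simp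
    · rcases D.eq_or_eq_of_vpos_mem_arc rfl hw with rfl | rfl <;> simp
    · rcases D.eq_or_eq_of_vpos_mem_arc rfl hw with rfl | rfl <;> simp
  · rintro (rfl | rfl | rfl)
    · exact Or.inl (Or.inl (D.vpos_mem_arc rfl).1)
    · exact Or.inl (Or.inr (D.vpos_mem_arc rfl).1)
    · exact Or.inr (D.vpos_mem_arc rfl).1

theorem isClosed_triCurve : IsClosed (triCurve D h1 h2 h3) :=
  (((Arc.isCompact_img _).union (Arc.isCompact_img _)).union (Arc.isCompact_img _)).isClosed

theorem triCurve_subset_img : triCurve D h1 h2 h3 ⊆ D.img := by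
  rintro p ((hp | hp) | hp) <;> exact Or.inr (Set.mem_iUnion.2 ⟨_, hp⟩)

theorem listCycleCurve_triangle : listCycleCurve D [x, y, z] = triCurve D h1 h2 h3 := by
  ext p
  simp only [listCycleCurve, triCurve, outerEdges_triple, Set.mem_iUnion, Set.mem_union,
    Set.mem_insert_iff, Set.mem_singleton_iff, PlaneDrawing.earc, exists_prop]
  constructor
  · rintro ⟨⟨e, he⟩, (rfl | rfl | rfl), hp⟩
    exacts [Or.inl (Or.inl hp), Or.inl (Or.inr hp), Or.inr hp]
  · rintro ((hp | hp) | hp)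
    exacts [⟨_, Or.inl rfl, hp⟩, ⟨_, Or.inr (Or.inl rfl), hp⟩, ⟨_, Or.inr (Or.inr rfl), hp⟩]

/-- Near a point of its frontier the outer face meets the component of `Jᶜ` containing the
point, and being unbounded it makes that component unbounded. -/
theorem mem_outsideOf_of_mem_frontier_outerFace {J : Set Pt} (hJ : IsClosed J)
    (hJD : J ⊆ D.img) {p : Pt} (hpJ : p ∉ J) (hp : p ∈ frontier D.outerFace) :
    p ∈ outsideOf J := by
  refine ⟨hpJ, fun hb => ?_⟩
  obtain ⟨r, hr0, hball⟩ := Metric.isOpen_iff.1 hJ.isOpen_compl p hpJ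
  obtain ⟨q, hqF, hdist⟩ := Metric.mem_closure_iff.1 (frontier_subset_closure hp) r hr0
  have hq : q ∈ connectedComponentIn Jᶜ p :=
    (convex_ball p r).isPreconnected.subset_connectedComponentIn (Metric.mem_ball_self hr0)
      hball (by rwa [Metric.mem_ball, dist_comm])
  rw [connectedComponentIn_eq hq] at hb
  exact hqF.2 (hb.subset (connectedComponentIn_mono q (Set.compl_subset_compl.2 hJD)))

end Drawing

section TriDisk

variable {V : Type*} [Finite V]

theorem TriDisk.vpos_mem_frontier_outerFace (T : TriDisk V) {B : V} (hB : B ∈ T.outer) :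
    T.D.vpos B ∈ frontier T.D.outerFace := by
  obtain ⟨q, hq, rfl⟩ := List.getElem_of_mem hB
  let i : Fin T.outer.length := ⟨q, hq⟩
  let j : Fin T.outer.length := ⟨(q + 1) % T.outer.length, Nat.mod_lt _ (by omega)⟩
  rw [T.outer_frontier, Set.mem_iUnion₂]
  exact ⟨⟨_, T.G.mem_edgeSet.2 (T.outer_adj i j rfl)⟩, ⟨i, j, rfl, rfl⟩, (T.D.vpos_mem_arc rfl).1⟩

theorem TriDisk.adj_of_mem_outerEdges (T : TriDisk V) {u v : V}
    (h : s(u, v) ∈ outerEdges T.outer) : T.G.Adj u v := by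
  obtain ⟨i, j, hij, he⟩ := h
  rcases Sym2.eq_iff.1 he with ⟨rfl, rfl⟩ | ⟨rfl, rfl⟩
  exacts [T.outer_adj i j hij, (T.outer_adj i j hij).symm]

theorem TriDisk.mem_outerEdges_of_adj (T : TriDisk V) (hT : ∀ u v : V, ¬ T.IsChord u v)
    {u v : V} (h : T.G.Adj u v) (hu : u ∈ T.outer) (hv : v ∈ T.outer) :
    s(u, v) ∈ outerEdges T.outer :=
  not_not.1 fun hne => hT u v ⟨h, hu, hv, hne⟩

theorem TriDisk.IsW.enclosed_triangle {T : TriDisk V} (hW : T.IsW) {x y z B : V}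
    (h1 : T.G.Adj x y) (h2 : T.G.Adj y z) (h3 : T.G.Adj z x) (hB : B ∈ T.outer)
    (hBx : B ≠ x) (hBy : B ≠ y) (hBz : B ≠ z) : enclosed T.D [x, y, z] = {x, y, z} := by
  have hBJ : T.D.vpos B ∉ triCurve T.D h1 h2 h3 := by
    simpa [vpos_mem_triCurve_iff] using ⟨hBx, hBy, hBz⟩
  have hBout := mem_outsideOf_of_mem_frontier_outerFace T.D (isClosed_triCurve T.D h1 h2 h3)
    (triCurve_subset_img T.D h1 h2 h3) hBJ (T.vpos_mem_frontier_outerFace hB)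
  ext w
  simp only [enclosed, listCycleCurve_triangle T.D h1 h2 h3, Set.mem_ofPred_eq,
    vpos_mem_triCurve_iff, Set.mem_insert_iff, Set.mem_singleton_iff]
  exact or_iff_left fun hw => hW ⟨x, y, z, h1, h2, h3, ⟨w, hw⟩, ⟨B, hBout⟩⟩

theorem TriDisk.neighbour_not_mem_outer [DecidableEq V] (T : TriDisk V)
    (hT : ∀ u v : V, ¬ T.IsChord u v) {A B C : V} (hord : CcwOrder T.outer A B C)
    {nbrs : List V} (hnd : nbrs.Nodup)
    (hhead : nbrs.head? = (ccwPath T.outer B C)[(ccwPath T.outer B C).length - 2]?)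
    (hlast : nbrs.getLast? = (ccwPath T.outer C A)[1]?) {j : ℕ} (hj0 : 0 < j)
    (hj : j < nbrs.length - 1) (hadj : T.G.Adj C nbrs[j]) : nbrs[j] ∉ T.outer := by
  intro hout
  rcases hord.eq_ccwPath_of_mk_mem_outerEdges T.nodup hout
    (T.mem_outerEdges_of_adj hT hadj hord.2.2.1 hout) with h | h
  · rw [← hlast, List.getLast?_eq_getElem?, List.getElem?_eq_getElem (by omega),
      Option.some_inj, hnd.getElem_inj_iff] at h
    omega
  · rw [← hhead, List.head?_eq_getElem?, List.getElem?_eq_getElem (by omega),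
      Option.some_inj, hnd.getElem_inj_iff] at h
    omega

end TriDisk

/-- In the setup of the chordless case, the corners of each
non-edge block are pairwise distinct: if the `i`-th block `G_i` is not a single
edge, then `t_i`, `t_{i+1}` and the successor `C'` of `t_i` on `P_{t_i t_{i+1}}` are
three distinct vertices; in particular, `(t_i, t_{i+1})` is not an edge of `G`
(otherwise `{u_j, t_i, t_{i+1}}` would be a separating triangle of `G`). -/
theorem chordless_case_block_corners_distinct
    {V : Type*} [Finite V] [DecidableEq V]
    (T : TriDisk V) (hW : T.IsW)
    (A B C : V) (hcc : ChordCond T A B C)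
    (hnochord : ∀ u v : V, ¬ T.IsChord u v)
    (nbrs : List V) (hnd : nbrs.Nodup)
    (hmem : ∀ x : V, x ∈ nbrs ↔ T.G.Adj C x)
    (hhead : nbrs.head? = (ccwPath T.outer B C)[(ccwPath T.outer B C).length - 2]?)
    (hlast : nbrs.getLast? = (ccwPath T.outer C A)[1]?)
    (jx : ℕ) (hjx0 : 0 < jx) (hjxq : jx + 1 < nbrs.length)
    (ts : List V) (hts_sub : ts.Sublist (ccwPath T.outer C A))
    (hts_mem : ∀ y : V, y ∈ ts ↔
      (y ∈ ccwPath T.outer C A ∧ T.G.Adj (nbrs.get ⟨jx, by omega⟩) y)) :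
    ∀ (i : ℕ) (hi : i + 1 < ts.length) (ti ti1 uj : V),
      ti = ts.get ⟨i, by omega⟩ → ti1 = ts.get ⟨i + 1, hi⟩ →
      uj = nbrs.get ⟨jx, by omega⟩ →
      ¬ (enclosed T.D (ccwPath T.outer ti ti1 ++ [uj]) \ {uj} = {ti, ti1} ∧
          T.G.Adj ti ti1) →
      ∃ hlen : 1 < (ccwPath T.outer ti ti1).length,
        (ccwPath T.outer ti ti1).get ⟨1, hlen⟩ ≠ ti ∧
        (ccwPath T.outer ti ti1).get ⟨1, hlen⟩ ≠ ti1 ∧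
        ti ≠ ti1 ∧
        ¬ T.G.Adj ti ti1 := by
  intro i hi ti ti1 uj rfl rfl rfl hblock
  have hord := hcc.1
  simp only [List.get_eq_getElem] at hblock ⊢
  have hts_outer : ∀ k (hk : k < ts.length), ts[k] ∈ T.outer := fun k hk =>
    mem_of_mem_ccwPath hord.1 (hts_sub.subset (List.getElem_mem hk))
  have hpair : [ts[i], ts[i + 1]].Sublist ts :=
    List.map_getElem_sublist (is := [⟨i, by omega⟩, ⟨i + 1, hi⟩]) (by simp)
  rcases hord.ccwPath_eq_pair_or_of_pair_sublist T.nodup (hpair.trans hts_sub) with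
    ⟨hpath, hedge⟩ | ⟨hlen, h1, h2, h3, hnot⟩
  · have hu : ∀ k (hk : k < ts.length), T.G.Adj nbrs[jx] ts[k] := fun k hk =>
      ((hts_mem _).1 (List.getElem_mem hk)).2
    have huj : nbrs[jx] ∉ T.outer := T.neighbour_not_mem_outer hnochord hord hnd hhead hlast
      hjx0 (by omega) ((hmem _).1 (List.getElem_mem _))
    have hne : ∀ k (hk : k < ts.length), ts[k] ≠ nbrs[jx] := fun k hk h =>
      huj (h ▸ hts_outer k hk)
    have hB : B ∉ ccwPath T.outer C A := hord.not_mem_ccwPath T.nodup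
    have htri := hW.enclosed_triangle (T.adj_of_mem_outerEdges hedge) (hu _ _).symm (hu _ _)
      hord.2.1 (fun h => hB (h ▸ hts_sub.subset (List.getElem_mem _)))
      (fun h => hB (h ▸ hts_sub.subset (List.getElem_mem _))) (fun h => huj (h ▸ hord.2.1))
    refine absurd ⟨?_, T.adj_of_mem_outerEdges hedge⟩ hblock
    rw [hpath, List.cons_append, List.cons_append, List.nil_append, htri,
      Set.insert_sdiff_of_notMem _ (Set.notMem_singleton_iff.2 (hne _ _)),
      Set.pair_sdiff_right (hne _ _)]
  · exact ⟨hlen, h1, h2, h3, fun hadj => hnot (T.mem_outerEdges_of_adj hnochord hadj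
      (hts_outer _ _) (hts_outer _ _))⟩
end CZPaper
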